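/- arXiv:2605.06899 — 3 statements merged into one kernel-verified Lean document; each statement's English description precedes it below -/
import Mathlib

section
/- Let m ≥ 2 and suppose x : S → ℝ satisfies ∑_{i∈S} x_i ≥ 1 with 0 ≤ 2 ln m · x_i ≤ 1 for each i. If thresholds t_i are independent uniform on [0,1], then the probability that 2 ln m · x_i < t_i for every i ∈ S is at most 1/m². -/
/-!
Each threshold clears `c` with probability at most `1 - c ≤ exp (-c)`, so by independence the
event has probability at most `exp (-∑ c i)`; with `c i = 2 ln m · x i` and `∑ x i ≥ 1` this is
at most `exp (-2 ln m) = 1 / m²`.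
-/

open MeasureTheory ProbabilityTheory

section UniformThresholds

variable {Ω : Type*} [MeasurableSpace Ω] {μ : Measure Ω}

lemma measure_lt_le_ofReal_exp_neg {T : Ω → ℝ} (hT : Measurable T)
    (hunif : μ.map T = volume.restrict (Set.Icc (0 : ℝ) 1)) (c : ℝ) :
    μ {ω | c < T ω} ≤ ENNReal.ofReal (Real.exp (-c)) :=
  calc μ {ω | c < T ω} = volume (Set.Ioi c ∩ Set.Icc 0 1) := by
        rw [← Measure.restrict_apply measurableSet_Ioi, ← hunif,
          Measure.map_apply hT measurableSet_Ioi]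
        rfl
    _ ≤ volume (Set.Ioc c 1) := measure_mono fun _ hy => ⟨hy.1, hy.2.2⟩
    _ = ENNReal.ofReal (1 - c) := Real.volume_Ioc
    _ ≤ ENNReal.ofReal (Real.exp (-c)) :=
        ENNReal.ofReal_le_ofReal (by linarith [Real.add_one_le_exp (-c)])

lemma iIndepFun.measure_forall_lt_le_ofReal_exp_neg_sum {S : Type*} [Fintype S]
    {t : S → Ω → ℝ} (ht : ∀ i, Measurable (t i)) (hindep : iIndepFun t μ)
    (hunif : ∀ i, μ.map (t i) = volume.restrict (Set.Icc (0 : ℝ) 1)) (c : S → ℝ) :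
    μ {ω | ∀ i, c i < t i ω} ≤ ENNReal.ofReal (Real.exp (-∑ i, c i)) :=
  calc μ {ω | ∀ i, c i < t i ω} = ∏ i, μ {ω | c i < t i ω} := by
        rw [Set.ofPred_forall]
        exact hindep.meas_iInter fun i => ⟨Set.Ioi (c i), measurableSet_Ioi, rfl⟩
    _ ≤ ∏ i, ENNReal.ofReal (Real.exp (-c i)) :=
        Finset.prod_le_prod' fun i _ => measure_lt_le_ofReal_exp_neg (ht i) (hunif i) (c i)
    _ = ENNReal.ofReal (Real.exp (-∑ i, c i)) := by
        rw [← ENNReal.ofReal_prod_of_nonneg fun i _ => (Real.exp_pos _).le, ← Real.exp_sum,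
          Finset.sum_neg_distrib]

end UniformThresholds

theorem coverage_edge_miss_prob_general
    {Ω : Type*} [MeasurableSpace Ω] (μ : Measure Ω)
    {S : Type*} [Fintype S] (m : ℝ) (hm : 2 ≤ m) (x : S → ℝ)
    (hsum : 1 ≤ ∑ i, x i)
    (t : S → Ω → ℝ) (ht : ∀ i, Measurable (t i))
    (hindep : iIndepFun t μ)
    (hunif : ∀ i, μ.map (t i) = MeasureTheory.volume.restrict (Set.Icc (0 : ℝ) 1)) :
    μ {ω | ∀ i, 2 * Real.log m * x i < t i ω} ≤ ENNReal.ofReal (1 / m ^ 2) := by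
  have hlog : 0 ≤ Real.log m := Real.log_nonneg (by linarith)
  calc μ {ω | ∀ i, 2 * Real.log m * x i < t i ω}
      ≤ ENNReal.ofReal (Real.exp (-∑ i, 2 * Real.log m * x i)) :=
        iIndepFun.measure_forall_lt_le_ofReal_exp_neg_sum ht hindep hunif _
    _ ≤ ENNReal.ofReal (Real.exp (-(2 * Real.log m))) := by
        rw [← Finset.mul_sum]
        exact ENNReal.ofReal_le_ofReal <| Real.exp_le_exp.2 <| neg_le_neg <|
          le_mul_of_one_le_right (by positivity) hsum
    _ = ENNReal.ofReal (1 / m ^ 2) := by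
        rw [Real.exp_neg, ← Real.log_rpow (by linarith), Real.exp_log (by positivity),
          one_div, Real.rpow_two]

theorem coverage_edge_miss_prob
    {Ω : Type*} [MeasurableSpace Ω] (μ : Measure Ω) [IsProbabilityMeasure μ]
    {S : Type*} [Fintype S] (m : ℝ) (hm : 2 ≤ m) (x : S → ℝ)
    (hx0 : ∀ i, 0 ≤ 2 * Real.log m * x i) (hx1 : ∀ i, 2 * Real.log m * x i ≤ 1)
    (hsum : 1 ≤ ∑ i, x i)
    (t : S → Ω → ℝ) (ht : ∀ i, Measurable (t i))
    (hindep : iIndepFun t μ)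
    (hunif : ∀ i, μ.map (t i) = MeasureTheory.volume.restrict (Set.Icc (0 : ℝ) 1)) :
    μ {ω | ∀ i, 2 * Real.log m * x i < t i ω} ≤ ENNReal.ofReal (1 / m ^ 2) :=
  coverage_edge_miss_prob_general μ m hm x hsum t ht hindep hunif
end

section
/- Let E be a finite set of edges with values y : E → ℝ≥0, suppose ∑_{e∈E} y_e ≥ ℓ for an integer ℓ ≥ 1, and let each e be independently retained with probability p_e = min(1, 4 ln m · y_e) where m ≥ 2. Then the probability that no edge of E is retained is at most m^{−4ℓ}. -/
open MeasureTheory ProbabilityTheory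

theorem cut_survival_bound
    {Ω : Type*} [MeasurableSpace Ω] (P : Measure Ω) [IsProbabilityMeasure P]
    {E : Type*} [Fintype E] (m : ℝ) (hm : 2 ≤ m)
    (y : E → ℝ) (hy : ∀ e, 0 ≤ y e) (ℓ : ℕ) (hℓ : 1 ≤ ℓ)
    (hsum : (ℓ : ℝ) ≤ ∑ e, y e)
    (R : E → Set Ω) (hR : ∀ e, MeasurableSet (R e))
    (hindep : iIndepSet R P)
    (hprob : ∀ e, P (R e) = ENNReal.ofReal (min 1 (4 * Real.log m * y e))) :
    P (⋂ e, (R e)ᶜ) ≤ ENNReal.ofReal (1 / m ^ (4 * ℓ)) := by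
  have hm0 : (0:ℝ) < m := lt_of_lt_of_le (by norm_num) hm
  have hlogm : 0 < Real.log m := Real.log_pos (by linarith)
  set c : ℝ := 4 * Real.log m with hc
  have hc0 : 0 < c := by positivity
  -- independence gives product formula for complements
  have hind : iIndep (fun i ↦ MeasurableSpace.generateFrom {R i}) P :=
    (iIndepSet_iff_iIndep R P).1 hindep
  have hmeas : ∀ e, MeasurableSet[MeasurableSpace.generateFrom {R e}] ((R e)ᶜ) :=
    fun e => (MeasurableSpace.measurableSet_generateFrom (Set.mem_singleton _)).compl
  have hprod : P (⋂ e, (R e)ᶜ) = ∏ e, P ((R e)ᶜ) := hind.meas_iInter hmeas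
  have hcompl : ∀ e, P ((R e)ᶜ) = ENNReal.ofReal (1 - min 1 (c * y e)) := by
    intro e
    rw [prob_compl_eq_one_sub (hR e), hprob e,
      ENNReal.sub_eq_of_eq_add_rev (by simp)]
    rw [← ENNReal.ofReal_one, ← ENNReal.ofReal_add
      (le_min zero_le_one (mul_nonneg hc0.le (hy e)))
      (by simp [sub_nonneg, min_le_left])]
    ring_nf
  have hnn : ∀ e, (0:ℝ) ≤ 1 - min 1 (c * y e) := by
    intro e; simp [sub_nonneg, min_le_left]
  rw [hprod]
  have hprodR : ∏ e, P ((R e)ᶜ) = ENNReal.ofReal (∏ e, (1 - min 1 (c * y e))) := by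
    rw [ENNReal.ofReal_prod_of_nonneg (fun e _ => hnn e)]
    exact Finset.prod_congr rfl (fun e _ => hcompl e)
  rw [hprodR]
  apply ENNReal.ofReal_le_ofReal
  by_cases hex : ∃ e, 1 ≤ c * y e
  · obtain ⟨e, he⟩ := hex
    have : (1 : ℝ) - min 1 (c * y e) = 0 := by
      rw [min_eq_left he]; ring
    rw [Finset.prod_eq_zero (Finset.mem_univ e) this]
    positivity
  · push_neg at hex
    have hmin : ∀ e, min 1 (c * y e) = c * y e := fun e => min_eq_right (hex e).le
    calc ∏ e, (1 - min 1 (c * y e)) ≤ ∏ e, Real.exp (-(c * y e)) := by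
          apply Finset.prod_le_prod (fun e _ => hnn e)
          intro e _
          rw [hmin e]
          have := Real.add_one_le_exp (-(c * y e))
          linarith
      _ = Real.exp (∑ e, -(c * y e)) := (Real.exp_sum _ _).symm
      _ ≤ Real.exp (-(c * ℓ)) := by
          apply Real.exp_le_exp.2
          rw [Finset.sum_neg_distrib, ← Finset.mul_sum]
          nlinarith
      _ = 1 / m ^ (4 * ℓ) := by
          rw [Real.exp_neg, one_div]
          congr 1
          rw [show c * (ℓ:ℝ) = ((4 * ℓ : ℕ) : ℝ) * Real.log m by push_cast; rw [hc]; ring,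
            Real.exp_nat_mul, Real.exp_log hm0]
end

section
/- Let G be a finite simple graph, λ : V → Finset (Fin k) an assignment of available interfaces, and x : Fin k × V → ℝ a fractional solution with x_{i,v} ≥ 1/k whenever interface i is selected at v. If for every edge uv there exists i ∈ λ(u) ∩ λ(v) with min(x_{i,u}, x_{i,v}) ≥ 1/k, then the integral assignment λ_A(v) = {i ∈ λ(v) : x_{i,v} ≥ 1/k} covers every edge of G, and for every vertex v, ∑_{i ∈ λ_A(v)} c(i,v) ≤ k · ∑_{i ∈ λ(v)} c(i,v) · x_{i,v} for any nonnegative costs c. -/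
open scoped Classical

theorem k_approx_rounding
    {V : Type*} [Fintype V] [DecidableEq V] (G : SimpleGraph V)
    (k : ℕ) (hk : 1 ≤ k)
    (lam : V → Finset (Fin k)) (x : Fin k × V → ℝ) (c : Fin k × V → ℝ)
    (hc : ∀ i v, 0 ≤ c (i, v))
    (hx0 : ∀ i v, 0 ≤ x (i, v))
    (hedge : ∀ u v, G.Adj u v →
      ∃ i ∈ lam u ∩ lam v, (1 : ℝ) / k ≤ min (x (i, u)) (x (i, v))) :
    (∀ u v, G.Adj u v →
        (((lam u).filter (fun i => (1 : ℝ) / k ≤ x (i, u))) ∩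
          ((lam v).filter (fun i => (1 : ℝ) / k ≤ x (i, v)))).Nonempty) ∧
    (∀ v, ∑ i ∈ (lam v).filter (fun i => (1 : ℝ) / k ≤ x (i, v)), c (i, v) ≤
        (k : ℝ) * ∑ i ∈ lam v, c (i, v) * x (i, v)) := by
  constructor
  · intro u v huv
    obtain ⟨i, hi, hmin⟩ := hedge u v huv
    simp only [Finset.mem_inter] at hi
    exact ⟨i, by
      simp only [Finset.mem_inter, Finset.mem_filter]
      exact ⟨⟨hi.1, hmin.trans (min_le_left _ _)⟩, ⟨hi.2, hmin.trans (min_le_right _ _)⟩⟩⟩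
  · intro v
    have hk0 : (0 : ℝ) < k := by exact_mod_cast hk
    rw [Finset.mul_sum]
    refine Finset.sum_le_sum_of_subset_of_nonneg (Finset.filter_subset _ _) ?_ |>.trans'
      (Finset.sum_le_sum ?_) |>.trans (le_refl _)
    · intro i hi _
      exact mul_nonneg hk0.le (mul_nonneg (hc i v) (hx0 i v))
    · intro i hi
      rw [Finset.mem_filter] at hi
      have := hi.2
      calc c (i, v) = (k : ℝ) * (c (i, v) * (1 / k)) := by field_simp
        _ ≤ (k : ℝ) * (c (i, v) * x (i, v)) := by
            apply mul_le_mul_of_nonneg_left (mul_le_mul_of_nonneg_left this (hc i v)) hk0.le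
end
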